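/- Let ℓ ≥ 3 be an odd integer, let v ∈ C be a primitive ℓ-th root of unity, and let r be an integer with 0 ≤ r ≤ ℓ. Then in the polynomial ring C[x] one has P_ℓ(x) · P_r(x) = P_{ℓ+r}(x), where P_m are the idivided-power polynomials at v. (This is the identity B_i^{[ℓ]} B_i^{[r]} = B_i^{[ℓ+r]} for 0 ≤ r ≤ ℓ established in the proof of Proposition 7.5 of the paper, in the split rank-one iquantum group at v, where B_i generates a free polynomial algebra and B_i^{[m]} = P_m(B_i).) -/

import Mathlib

open Polynomial

/-- The quantum integer `[m]_q = (q^m - q^{-m})/(q - q^{-1})`. -/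
noncomputable def qInt (q : ℂ) (m : ℕ) : ℂ := (q ^ m - q⁻¹ ^ m) / (q - q⁻¹)

/-- The idivided-power polynomials at `v`:
`P_{2k}(x) = ∏_{r=1}^{k} (x² + (v - v⁻¹)² [2r-1]_v²)` and
`P_{2k+1}(x) = x ∏_{r=1}^{k} (x² + (v - v⁻¹)² [2r]_v²)`. -/
noncomputable def iDP (v : ℂ) (m : ℕ) : Polynomial ℂ :=
  if m % 2 = 0 then
    ∏ r ∈ Finset.range (m / 2), (X ^ 2 + C ((v - v⁻¹) ^ 2 * qInt v (2 * r + 1) ^ 2))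
  else
    X * ∏ r ∈ Finset.range (m / 2), (X ^ 2 + C ((v - v⁻¹) ^ 2 * qInt v (2 * r + 2) ^ 2))

/-! At a root of unity `v^ℓ = 1` the quantum integers satisfy `[ℓ + n]_v = [n]_v` and
`[ℓ - n]_v = -[n]_v`, so the factors `x² + (v - v⁻¹)² [n]_v²` of the idivided powers are
invariant under `n ↦ ℓ + n` and `n ↦ ℓ - n`, and the factor with `n = ℓ` is `x²`.
For odd `ℓ = 2k + 1` the reflection `n ↦ ℓ - n` exchanges the odd and even indices below `ℓ`,
so `P_ℓ = x ∏_{j<k} (x² + (v - v⁻¹)² [2j+1]_v²)`; splitting the product defining `P_{ℓ+r}`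
at `j = k` then exhibits it as `P_ℓ P_r`. -/

section QuantumInteger

variable {v : ℂ} {ℓ : ℕ}

lemma qInt_add_of_pow_eq_one (h : v ^ ℓ = 1) (n : ℕ) : qInt v (ℓ + n) = qInt v n := by
  rw [qInt, qInt, pow_add, pow_add, h, inv_pow, h, inv_one, one_mul, one_mul]

lemma qInt_of_pow_eq_one (h : v ^ ℓ = 1) : qInt v ℓ = 0 := by
  rw [qInt, inv_pow, h, inv_one, sub_self, zero_div]

lemma qInt_sub_of_pow_eq_one (h : v ^ ℓ = 1) (hv : v ≠ 0) {n : ℕ} (hn : n ≤ ℓ) :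
    qInt v (ℓ - n) = -qInt v n := by
  have hpow : v ^ (ℓ - n) = v⁻¹ ^ n := by rw [pow_sub₀ v hv hn, h, one_mul, inv_pow]
  have hinv : v⁻¹ ^ (ℓ - n) = v ^ n := by rw [inv_pow, hpow, inv_pow, inv_inv]
  rw [qInt, qInt, hpow, hinv, ← neg_div, neg_sub]

end QuantumInteger

noncomputable def iDPFactor (v : ℂ) (n : ℕ) : ℂ[X] :=
  X ^ 2 + C ((v - v⁻¹) ^ 2 * qInt v n ^ 2)

lemma iDP_two_mul (v : ℂ) (k : ℕ) :
    iDP v (2 * k) = ∏ j ∈ Finset.range k, iDPFactor v (2 * j + 1) := by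
  simp [iDP, iDPFactor]

lemma iDP_two_mul_add_one (v : ℂ) (k : ℕ) :
    iDP v (2 * k + 1) = X * ∏ j ∈ Finset.range k, iDPFactor v (2 * j + 2) := by
  have hdiv : (2 * k + 1) / 2 = k := by omega
  simp [iDP, iDPFactor, hdiv]

section RootOfUnity

variable {v : ℂ} {ℓ : ℕ}

lemma iDPFactor_add_of_pow_eq_one (h : v ^ ℓ = 1) (n : ℕ) :
    iDPFactor v (ℓ + n) = iDPFactor v n := by
  rw [iDPFactor, iDPFactor, qInt_add_of_pow_eq_one h]

lemma iDPFactor_of_pow_eq_one (h : v ^ ℓ = 1) : iDPFactor v ℓ = X ^ 2 := by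
  simp [iDPFactor, qInt_of_pow_eq_one h]

lemma iDPFactor_sub_of_pow_eq_one (h : v ^ ℓ = 1) (hv : v ≠ 0) {n : ℕ} (hn : n ≤ ℓ) :
    iDPFactor v (ℓ - n) = iDPFactor v n := by
  rw [iDPFactor, iDPFactor, qInt_sub_of_pow_eq_one h hv hn, neg_sq]

lemma prod_iDPFactor_even_eq_odd {k : ℕ} (h : v ^ (2 * k + 1) = 1) :
    ∏ j ∈ Finset.range k, iDPFactor v (2 * j + 2) =
      ∏ j ∈ Finset.range k, iDPFactor v (2 * j + 1) := by
  have hv : v ≠ 0 := left_ne_zero_of_mul_eq_one (by rwa [← pow_succ'])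
  rw [← Finset.prod_range_reflect (fun j ↦ iDPFactor v (2 * j + 1))]
  refine Finset.prod_congr rfl fun j hj ↦ ?_
  have hj : j < k := Finset.mem_range.mp hj
  rw [show 2 * (k - 1 - j) + 1 = 2 * k + 1 - (2 * j + 2) by omega,
    iDPFactor_sub_of_pow_eq_one h hv (by omega)]

lemma iDP_of_pow_eq_one {k : ℕ} (h : v ^ (2 * k + 1) = 1) :
    iDP v (2 * k + 1) = X * ∏ j ∈ Finset.range k, iDPFactor v (2 * j + 1) := by
  rw [iDP_two_mul_add_one, prod_iDPFactor_even_eq_odd h]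

lemma iDP_mul_two_mul_of_pow_eq_one {k : ℕ} (h : v ^ (2 * k + 1) = 1) (s : ℕ) :
    iDP v (2 * k + 1) * iDP v (2 * s) = iDP v (2 * k + 1 + 2 * s) := by
  have hsum : ∀ j, 2 * (k + j) + 2 = 2 * k + 1 + (2 * j + 1) := fun j ↦ by ring
  rw [show 2 * k + 1 + 2 * s = 2 * (k + s) + 1 by ring, iDP_two_mul_add_one,
    iDP_two_mul_add_one, iDP_two_mul, Finset.prod_range_add, mul_assoc]
  simp only [hsum, iDPFactor_add_of_pow_eq_one h]

lemma iDP_mul_two_mul_add_one_of_pow_eq_one {k : ℕ} (h : v ^ (2 * k + 1) = 1) (s : ℕ) :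
    iDP v (2 * k + 1) * iDP v (2 * s + 1) = iDP v (2 * k + 1 + (2 * s + 1)) := by
  have hsum : ∀ j, 2 * (k + (j + 1)) + 1 = 2 * k + 1 + (2 * j + 2) := fun j ↦ by ring
  rw [show 2 * k + 1 + (2 * s + 1) = 2 * (k + (s + 1)) by ring, iDP_two_mul,
    Finset.prod_range_add, Finset.prod_range_succ', add_zero, iDPFactor_of_pow_eq_one h,
    iDP_of_pow_eq_one h, iDP_two_mul_add_one]
  simp only [hsum, iDPFactor_add_of_pow_eq_one h]
  ring

end RootOfUnity

theorem iDP_ell_mul_general (ℓ : ℕ) (hodd : Odd ℓ) (v : ℂ)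
    (hv : IsPrimitiveRoot v ℓ) (r : ℕ) :
    iDP v ℓ * iDP v r = iDP v (ℓ + r) := by
  obtain ⟨k, rfl⟩ := hodd
  rcases Nat.even_or_odd' r with ⟨s, rfl | rfl⟩
  · exact iDP_mul_two_mul_of_pow_eq_one hv.pow_eq_one s
  · exact iDP_mul_two_mul_add_one_of_pow_eq_one hv.pow_eq_one s

/-- The identity `B_i^{[ℓ]} B_i^{[r]} = B_i^{[ℓ+r]}` for `0 ≤ r ≤ ℓ` from the proof of
Proposition 7.5 of the paper: for an odd `ℓ ≥ 3`, a primitive `ℓ`-th root of unity `v`,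
and `0 ≤ r ≤ ℓ`, one has `P_ℓ · P_r = P_{ℓ+r}` in `ℂ[x]`. -/
theorem iDP_ell_mul (ℓ : ℕ) (hodd : Odd ℓ) (hl : 3 ≤ ℓ) (v : ℂ)
    (hv : IsPrimitiveRoot v ℓ) (r : ℕ) (hr : r ≤ ℓ) :
    iDP v ℓ * iDP v r = iDP v (ℓ + r) :=
  iDP_ell_mul_general ℓ hodd v hv r
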